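/- arXiv:2106.05172 — 2 statements merged into one kernel-verified Lean document; each statement's English description precedes it below -/
import Mathlib

section
/- Assume: (C2) there exist κ_l, κ_u > 0 with κ_l ≤ θᵀ(1/n)X̃ᵀX̃θ ≤ κ_u for every unit-norm θ in the cone C; (C4) β* ≠ 0; the gradient bound (1/n)‖X̃ᵀε̃‖_∞ ≤ δ/4 holds; and 0 < γ < δ/(16·r·‖β*‖_∞). Then for any A ∈ 𝒜, every minimizer β̂(A) of (1/(2n))‖ỹ − X̃β‖₂² + δ‖β‖₁ + (γ/2)‖Aβ‖₂² satisfies ‖β̂(A) − β*‖₂² ≤ (9δ²/(4κ_l²))·s. -/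
open Matrix Finset MeasureTheory ProbabilityTheory Filter
open scoped Kronecker ENNReal Topology

noncomputable section

/-- squared Euclidean (ℓ2) norm of a finite real vector -/
def l2sq {ι : Type*} [Fintype ι] (v : ι → ℝ) : ℝ := ∑ i, (v i) ^ 2

/-- ℓ1 norm of a finite real vector -/
def l1 {ι : Type*} [Fintype ι] (v : ι → ℝ) : ℝ := ∑ i, |v i|

/-- ℓ∞ (max-absolute-entry) norm of a finite real vector -/
def linf {ι : Type*} [Fintype ι] (v : ι → ℝ) : ℝ := ⨆ i, |v i|

/-- index type for ordered pairs (l, m) with l ≠ m; has cardinality r(r-1) -/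
abbrev PairIdx (r : ℕ) := {lm : Fin r × Fin r // lm.1 ≠ lm.2}

/-- The set 𝒜 of matrices A ∈ {-1,0,1}^{r(r-1)p × pr} such that
‖Aβ‖₂² = Σ_l Σ_{m ≠ l} ‖β_l - d_{lm} β_m‖₂² for some d_{lm} ∈ {-1,0,1}. -/
def calA (p r : ℕ) : Set (Matrix (PairIdx r × Fin p) (Fin r × Fin p) ℝ) :=
  { A | (∀ i j, A i j = -1 ∨ A i j = 0 ∨ A i j = 1) ∧
      ∃ d : Fin r → Fin r → ℝ,
        (∀ l m, d l m = -1 ∨ d l m = 0 ∨ d l m = 1) ∧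
        ∀ β : Fin r × Fin p → ℝ,
          l2sq (A.mulVec β) =
            ∑ l : Fin r, ∑ m ∈ Finset.univ.filter (fun m => m ≠ l),
              ∑ j : Fin p, (β (l, j) - d l m * β (m, j)) ^ 2 }

/-- X̃ = I_r ⊗ X -/
def Xtil {n p : ℕ} (r : ℕ) (X : Matrix (Fin n) (Fin p) ℝ) :
    Matrix (Fin r × Fin n) (Fin r × Fin p) ℝ :=
  (1 : Matrix (Fin r) (Fin r) ℝ) ⊗ₖ X

/-- MinPen objective for fixed A:
(1/(2n))‖ỹ - X̃β‖₂² + δ‖β‖₁ + (γ/2)‖Aβ‖₂². -/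
def obj {n p r : ℕ} (δ γ : ℝ) (ytil : Fin r × Fin n → ℝ)
    (Xt : Matrix (Fin r × Fin n) (Fin r × Fin p) ℝ)
    (A : Matrix (PairIdx r × Fin p) (Fin r × Fin p) ℝ)
    (β : Fin r × Fin p → ℝ) : ℝ :=
  (1 / (2 * (n : ℝ))) * l2sq (fun i => ytil i - Xt.mulVec β i)
    + δ * l1 β + (γ / 2) * l2sq (A.mulVec β)

/-- the cone C = { a : ‖a_{M⊥}‖₁ ≤ 3‖a_M‖₁ } where M is the support of β* -/
def coneC {p r : ℕ} (βstar : Fin r × Fin p → ℝ) : Set (Fin r × Fin p → ℝ) :=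
  { a | l1 ((Function.support βstar)ᶜ.indicator a) ≤
        3 * l1 ((Function.support βstar).indicator a) }

section helper
variable {ι κ : Type*} [Fintype ι] [Fintype κ]

lemma l2sq_nonneg (v : ι → ℝ) : 0 ≤ l2sq v := Finset.sum_nonneg fun i _ => sq_nonneg _

lemma l1_nonneg (v : ι → ℝ) : 0 ≤ l1 v := Finset.sum_nonneg fun i _ => abs_nonneg _

lemma l2sq_expand (u w : ι → ℝ) (t : ℝ) :
    l2sq (fun i => u i + t * w i)
      = l2sq u + 2*t*(∑ i, u i * w i) + t^2 * l2sq w := by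
  simp only [l2sq]
  rw [Finset.mul_sum, Finset.mul_sum, ← Finset.sum_add_distrib, ← Finset.sum_add_distrib]
  exact Finset.sum_congr rfl fun i _ => by ring

lemma l2sq_expand_sub (u w : ι → ℝ) (t : ℝ) :
    l2sq (fun i => u i - t * w i)
      = l2sq u - 2*t*(∑ i, u i * w i) + t^2 * l2sq w := by
  simp only [l2sq]
  rw [Finset.mul_sum, Finset.mul_sum, ← Finset.sum_sub_distrib, ← Finset.sum_add_distrib]
  exact Finset.sum_congr rfl fun i _ => by ring

lemma l2sq_expand_add (u w : ι → ℝ) :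
    l2sq (fun i => u i + w i)
      = l2sq u + 2*(∑ i, u i * w i) + l2sq w := by
  simp only [l2sq]
  rw [Finset.mul_sum, ← Finset.sum_add_distrib, ← Finset.sum_add_distrib]
  exact Finset.sum_congr rfl fun i _ => by ring

lemma mulVec_sub_apply (X : Matrix κ ι ℝ) (x y : ι → ℝ) (t : ℝ) (i : κ) :
    X.mulVec (fun j => x j - t * y j) i = X.mulVec x i - t * X.mulVec y i := by
  simp only [Matrix.mulVec, dotProduct]
  rw [Finset.mul_sum, ← Finset.sum_sub_distrib]
  exact Finset.sum_congr rfl fun j _ => by ring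

lemma mulVec_add_apply' (X : Matrix κ ι ℝ) (x y : ι → ℝ) (i : κ) :
    X.mulVec (fun j => x j + y j) i = X.mulVec x i + X.mulVec y i := by
  simp only [Matrix.mulVec, dotProduct]
  rw [← Finset.sum_add_distrib]
  exact Finset.sum_congr rfl fun j _ => by ring

lemma mulVec_smul_apply (X : Matrix κ ι ℝ) (x : ι → ℝ) (a : ℝ) (i : κ) :
    X.mulVec (fun j => a * x j) i = a * X.mulVec x i := by
  simp only [Matrix.mulVec, dotProduct]
  rw [Finset.mul_sum]
  exact Finset.sum_congr rfl fun j _ => by ring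

lemma nonneg_of_forall_step (a b : ℝ) (hb : 0 ≤ b)
    (H : ∀ t : ℝ, 0 < t → t ≤ 1 → 0 ≤ a + t * b) : 0 ≤ a := by
  by_contra hcon
  push_neg at hcon
  have hbp : (0:ℝ) < b + 1 := by linarith
  have ht0 : 0 < min 1 (-a / (2*(b+1))) := lt_min one_pos (div_pos (by linarith) (by linarith))
  have h1 := H _ ht0 (min_le_left _ _)
  have h2 : min 1 (-a/(2*(b+1))) ≤ -a/(2*(b+1)) := min_le_right _ _
  have h3 : min 1 (-a/(2*(b+1))) * b ≤ (-a/(2*(b+1))) * b :=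
    mul_le_mul_of_nonneg_right h2 hb
  have h4 : (-a/(2*(b+1))) * b ≤ -a/2 := by
    rw [div_mul_eq_mul_div, div_le_div_iff₀ (by linarith) two_pos]
    nlinarith
  linarith

lemma l1_combo (x y g : ι → ℝ) (hg : ∀ j, g j = x j - y j) (t : ℝ)
    (ht : 0 ≤ t) (ht1 : t ≤ 1) :
    l1 (fun j => x j - t * g j) ≤ (1-t) * l1 x + t * l1 y := by
  have key : ∀ j, |x j - t * g j| ≤ (1-t)*|x j| + t*|y j| := by
    intro j
    have : x j - t * g j = (1-t)*x j + t*y j := by rw [hg j]; ring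
    rw [this]
    calc |(1-t)*x j + t*y j| ≤ |(1-t)*x j| + |t*y j| := abs_add_le _ _
      _ = (1-t)*|x j| + t*|y j| := by
          rw [abs_mul, abs_mul, abs_of_nonneg (by linarith : (0:ℝ) ≤ 1-t), abs_of_nonneg ht]
  calc l1 (fun j => x j - t * g j) ≤ ∑ j, ((1-t)*|x j| + t*|y j|) :=
        Finset.sum_le_sum fun j _ => key j
    _ = (1-t) * l1 x + t * l1 y := by
        rw [Finset.sum_add_distrib, ← Finset.mul_sum, ← Finset.mul_sum]; rfl

lemma opt_step {κ₂ : Type*} [Fintype κ₂]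
    (c1 c2 δ : ℝ) (hc1 : 0 ≤ c1) (hc2 : 0 ≤ c2) (hδ : 0 ≤ δ)
    (Y : κ → ℝ) (X : Matrix κ ι ℝ) (A : Matrix κ₂ ι ℝ) (x y g : ι → ℝ)
    (hg : ∀ j, g j = x j - y j)
    (hmin : ∀ β : ι → ℝ,
      c1 * l2sq (fun i => Y i - X.mulVec x i) + δ * l1 x + c2 * l2sq (A.mulVec x) ≤
      c1 * l2sq (fun i => Y i - X.mulVec β i) + δ * l1 β + c2 * l2sq (A.mulVec β)) :
    0 ≤ 2*c1*(∑ i, (Y i - X.mulVec x i) * X.mulVec g i)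
        + δ*(l1 y - l1 x)
        - 2*c2*(∑ i, A.mulVec x i * A.mulVec g i) := by
  refine nonneg_of_forall_step _ (c1 * l2sq (X.mulVec g) + c2 * l2sq (A.mulVec g))
    (add_nonneg (mul_nonneg hc1 (l2sq_nonneg _)) (mul_nonneg hc2 (l2sq_nonneg _))) ?_
  intro t ht ht1
  have hcomp := hmin (fun j => x j - t * g j)
  have e1 : l2sq (fun i => Y i - X.mulVec (fun j => x j - t * g j) i)
      = l2sq (fun i => Y i - X.mulVec x i)
        + 2*t*(∑ i, (Y i - X.mulVec x i) * X.mulVec g i)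
        + t^2 * l2sq (X.mulVec g) := by
    have e : (fun i => Y i - X.mulVec (fun j => x j - t * g j) i)
        = fun i => (Y i - X.mulVec x i) + t * X.mulVec g i := by
      funext i; rw [mulVec_sub_apply]; ring
    rw [e]
    exact l2sq_expand (fun i => Y i - X.mulVec x i) (X.mulVec g) t
  have e2 : l2sq (A.mulVec (fun j => x j - t * g j))
      = l2sq (A.mulVec x) - 2*t*(∑ i, A.mulVec x i * A.mulVec g i)
        + t^2 * l2sq (A.mulVec g) := by
    have e : A.mulVec (fun j => x j - t * g j)
        = fun i => A.mulVec x i - t * A.mulVec g i := by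
      funext i; exact mulVec_sub_apply A x g t i
    rw [e]
    exact l2sq_expand_sub (A.mulVec x) (A.mulVec g) t
  rw [e1, e2] at hcomp
  have hl1c := l1_combo x y g hg t ht.le ht1
  have hδl : δ * l1 (fun j => x j - t * g j) ≤ δ * ((1-t)*l1 x + t*l1 y) :=
    mul_le_mul_of_nonneg_left hl1c hδ
  have key : 0 ≤ t * ((2*c1*(∑ i, (Y i - X.mulVec x i) * X.mulVec g i)
      + δ*(l1 y - l1 x)
      - 2*c2*(∑ i, A.mulVec x i * A.mulVec g i))
      + t * (c1 * l2sq (X.mulVec g) + c2 * l2sq (A.mulVec g))) := by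
    nlinarith [hcomp, hδl]
  nlinarith [key, ht]

end helper

set_option maxHeartbeats 1600000

/-- Deterministic oracle bound: under the restricted eigenvalue condition, β* ≠ 0, the
gradient bound (1/n)‖X̃ᵀε̃‖_∞ ≤ δ/4 and 0 < γ < δ/(16r‖β*‖_∞), every minimizer β̂(A)
satisfies ‖β̂(A) - β*‖₂² ≤ (9δ²/(4κ_l²))s. -/
theorem statement12 (n p r : ℕ)
    (X : Matrix (Fin n) (Fin p) ℝ)
    (βstar : Fin r × Fin p → ℝ)
    (εt : Fin r × Fin n → ℝ)
    (δ γ κl κu : ℝ) (hκl : 0 < κl) (hκu : 0 < κu)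
    -- Condition (C2): restricted eigenvalue bounds on the cone C
    (hC2 : ∀ θ ∈ coneC βstar, l2sq θ = 1 →
      κl ≤ θ ⬝ᵥ ((1 / (n : ℝ)) • ((Xtil r X)ᵀ * Xtil r X)).mulVec θ ∧
      θ ⬝ᵥ ((1 / (n : ℝ)) • ((Xtil r X)ᵀ * Xtil r X)).mulVec θ ≤ κu)
    -- Condition (C4): β* ≠ 0
    (hC4 : βstar ≠ 0)
    -- gradient bound (1/n)‖X̃ᵀε̃‖_∞ ≤ δ/4
    (hgrad : ∀ j, (1 / (n : ℝ)) * |(Xtil r X)ᵀ.mulVec εt j| ≤ δ / 4)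
    -- tuning parameter condition 0 < γ < δ/(16 r ‖β*‖_∞)
    (hγpos : 0 < γ) (hγ : γ < δ / (16 * (r : ℝ) * linf βstar)) :
    ∀ A ∈ calA p r, ∀ βhat : Fin r × Fin p → ℝ,
      (∀ β : Fin r × Fin p → ℝ,
        obj δ γ (fun ik => (Xtil r X).mulVec βstar ik + εt ik) (Xtil r X) A βhat ≤
        obj δ γ (fun ik => (Xtil r X).mulVec βstar ik + εt ik) (Xtil r X) A β) →
      l2sq (fun j => βhat j - βstar j) ≤
        (9 * δ ^ 2 / (4 * κl ^ 2)) * ((Function.support βstar).ncard : ℝ) := by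
  classical
  intro A hA βhat hmin
  obtain ⟨hAent, d, hd, hQ⟩ := hA
  obtain ⟨j0, hj0⟩ : ∃ j, βstar j ≠ 0 := by
    by_contra hcon; push_neg at hcon
    exact hC4 (funext fun j => hcon j)
  have hlinf_ge : ∀ j, |βstar j| ≤ linf βstar := fun j =>
    le_ciSup (Set.Finite.bddAbove (Set.finite_range fun i => |βstar i|)) j
  have hlinf_pos : 0 < linf βstar := lt_of_lt_of_le (abs_pos.mpr hj0) (hlinf_ge j0)
  have hr : 0 < r := j0.1.pos
  have hrR : (0:ℝ) < r := by exact_mod_cast hr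
  have hDpos : (0:ℝ) < 16 * r * linf βstar := by positivity
  have hδ : 0 < δ := by
    have h1 : 0 < δ / (16 * (r:ℝ) * linf βstar) := hγpos.trans hγ
    have h2 := mul_pos h1 hDpos
    rwa [div_mul_cancel₀ _ hDpos.ne'] at h2
  have hγb : γ * (16 * (r:ℝ) * linf βstar) < δ := (lt_div_iff₀ hDpos).mp hγ
  have hd1 : ∀ l m, |d l m| ≤ 1 := fun l m => by
    rcases hd l m with h | h | h <;> simp [h]
  set Xt := Xtil r X with hXt
  set h : Fin r × Fin p → ℝ := fun j => βhat j - βstar j with hdef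
  set Y : Fin r × Fin n → ℝ := fun ik => Xt.mulVec βstar ik + εt ik with hYdef
  simp only [obj] at hmin
  have hgdef : ∀ j, h j = βhat j - βstar j := fun j => by rw [hdef]
  have hopt := opt_step (1/(2*(n:ℝ))) (γ/2) δ (by positivity) (by positivity) hδ.le
    Y Xt A βhat βstar h hgdef hmin
  -- rewrite residual
  have hb : βhat = fun j => βstar j + h j := funext fun j => by rw [hgdef j]; ring
  have hmv : ∀ i, Xt.mulVec βhat i = Xt.mulVec βstar i + Xt.mulVec h i := by
    intro i; conv_lhs => rw [hb]
    exact mulVec_add_apply' Xt βstar h i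
  have hAmv : ∀ i, A.mulVec βhat i = A.mulVec βstar i + A.mulVec h i := by
    intro i; conv_lhs => rw [hb]
    exact mulVec_add_apply' A βstar h i
  have hsum1 : ∑ i, (Y i - Xt.mulVec βhat i) * Xt.mulVec h i
      = (∑ i, εt i * Xt.mulVec h i) - l2sq (Xt.mulVec h) := by
    simp only [l2sq]
    rw [← Finset.sum_sub_distrib]
    refine Finset.sum_congr rfl fun i _ => ?_
    rw [hYdef, hmv i]; ring
  have hsum2 : ∑ i, A.mulVec βhat i * A.mulVec h i
      = (∑ i, A.mulVec βstar i * A.mulVec h i) + l2sq (A.mulVec h) := by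
    simp only [l2sq]
    rw [← Finset.sum_add_distrib]
    refine Finset.sum_congr rfl fun i _ => ?_
    rw [hAmv i]; ring
  rw [hsum1, hsum2] at hopt
  -- constants
  have h2c : 2*(1/(2*(n:ℝ))) = 1/(n:ℝ) := by
    rcases eq_or_ne (n:ℝ) 0 with h0 | h0
    · simp [h0]
    · field_simp
  rw [show (2:ℝ)*(γ/2) = γ by ring] at hopt
  rw [h2c] at hopt
  -- gradient term bound
  have hεW : ∑ i, εt i * Xt.mulVec h i = ∑ j, Xtᵀ.mulVec εt j * h j := by
    calc ∑ i, εt i * Xt.mulVec h i = ∑ i, ∑ j, εt i * (Xt i j * h j) := by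
          refine Finset.sum_congr rfl fun i _ => ?_
          simp only [Matrix.mulVec, dotProduct]
          rw [Finset.mul_sum]
      _ = ∑ j, ∑ i, εt i * (Xt i j * h j) := Finset.sum_comm
      _ = ∑ j, Xtᵀ.mulVec εt j * h j := by
          refine Finset.sum_congr rfl fun j _ => ?_
          simp only [Matrix.mulVec, dotProduct, Matrix.transpose_apply]
          rw [Finset.sum_mul]
          exact Finset.sum_congr rfl fun i _ => by ring
  have hB1 : (1/(n:ℝ)) * (∑ i, εt i * Xt.mulVec h i) ≤ (δ/4) * l1 h := by
    rw [hεW]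
    have e : (δ/4) * l1 h = ∑ j, (δ/4) * |h j| := by
      rw [l1, Finset.mul_sum]
    rw [e, Finset.mul_sum]
    refine Finset.sum_le_sum fun j _ => ?_
    have h1n : (0:ℝ) ≤ 1/(n:ℝ) := by positivity
    calc (1/(n:ℝ)) * (Xtᵀ.mulVec εt j * h j)
        ≤ (1/(n:ℝ)) * |Xtᵀ.mulVec εt j * h j| :=
          mul_le_mul_of_nonneg_left (le_abs_self _) h1n
      _ = ((1/(n:ℝ)) * |Xtᵀ.mulVec εt j|) * |h j| := by rw [abs_mul]; ring
      _ ≤ (δ/4) * |h j| := mul_le_mul_of_nonneg_right (hgrad j) (abs_nonneg _)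
  -- bilinear identity for A
  have hbil : ∑ i, A.mulVec βstar i * A.mulVec h i =
      ∑ l : Fin r, ∑ m ∈ Finset.univ.filter (fun m => m ≠ l), ∑ j : Fin p,
        (βstar (l,j) - d l m * βstar (m,j)) * (h (l,j) - d l m * h (m,j)) := by
    have h1 := hQ (fun j => βstar j + h j)
    have h2 := hQ βstar
    have h3 := hQ h
    have e0 : A.mulVec (fun j => βstar j + h j)
        = fun i => A.mulVec βstar i + A.mulVec h i :=
      funext fun i => mulVec_add_apply' A βstar h i
    rw [e0, l2sq_expand_add] at h1
    have e2 : ∑ l : Fin r, ∑ m ∈ Finset.univ.filter (fun m => m ≠ l), ∑ j : Fin p,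
          ((βstar (l,j) + h (l,j)) - d l m * (βstar (m,j) + h (m,j)))^2
        = (∑ l : Fin r, ∑ m ∈ Finset.univ.filter (fun m => m ≠ l), ∑ j : Fin p,
            (βstar (l,j) - d l m * βstar (m,j))^2)
          + 2*(∑ l : Fin r, ∑ m ∈ Finset.univ.filter (fun m => m ≠ l), ∑ j : Fin p,
            (βstar (l,j) - d l m * βstar (m,j)) * (h (l,j) - d l m * h (m,j)))
          + (∑ l : Fin r, ∑ m ∈ Finset.univ.filter (fun m => m ≠ l), ∑ j : Fin p,
            (h (l,j) - d l m * h (m,j))^2) := by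
      rw [Finset.mul_sum, ← Finset.sum_add_distrib, ← Finset.sum_add_distrib]
      refine Finset.sum_congr rfl fun l _ => ?_
      rw [Finset.mul_sum, ← Finset.sum_add_distrib, ← Finset.sum_add_distrib]
      refine Finset.sum_congr rfl fun m _ => ?_
      rw [Finset.mul_sum, ← Finset.sum_add_distrib, ← Finset.sum_add_distrib]
      exact Finset.sum_congr rfl fun j _ => by ring
    rw [e2] at h1
    linarith [h1, h2, h3]
  -- bound on the bilinear term
  have habs : |∑ l : Fin r, ∑ m ∈ Finset.univ.filter (fun m => m ≠ l), ∑ j : Fin p,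
        (βstar (l,j) - d l m * βstar (m,j)) * (h (l,j) - d l m * h (m,j))|
      ≤ 4*(r:ℝ)*linf βstar * l1 h := by
    have step : ∀ (l m : Fin r) (j : Fin p),
        |(βstar (l,j) - d l m * βstar (m,j)) * (h (l,j) - d l m * h (m,j))|
          ≤ (2*linf βstar) * (|h (l,j)| + |h (m,j)|) := by
      intro l m j
      rw [abs_mul]
      have hx : |βstar (l,j) - d l m * βstar (m,j)| ≤ 2*linf βstar := by
        calc |βstar (l,j) - d l m * βstar (m,j)|
            ≤ |βstar (l,j)| + |d l m * βstar (m,j)| := abs_sub _ _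
          _ ≤ linf βstar + 1 * linf βstar := by
              refine add_le_add (hlinf_ge _) ?_
              rw [abs_mul]
              exact mul_le_mul (hd1 l m) (hlinf_ge _) (abs_nonneg _) zero_le_one
          _ = 2*linf βstar := by ring
      have hy : |h (l,j) - d l m * h (m,j)| ≤ |h (l,j)| + |h (m,j)| := by
        calc |h (l,j) - d l m * h (m,j)|
            ≤ |h (l,j)| + |d l m * h (m,j)| := abs_sub _ _
          _ ≤ |h (l,j)| + |h (m,j)| := by
              rw [abs_mul]
              have := mul_le_of_le_one_left (abs_nonneg (h (m,j))) (hd1 l m)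
              linarith
      exact mul_le_mul hx hy (abs_nonneg _) (by positivity)
    have habs1 : |∑ l : Fin r, ∑ m ∈ Finset.univ.filter (fun m => m ≠ l), ∑ j : Fin p,
          (βstar (l,j) - d l m * βstar (m,j)) * (h (l,j) - d l m * h (m,j))|
        ≤ ∑ l : Fin r, ∑ m ∈ Finset.univ.filter (fun m => m ≠ l), ∑ j : Fin p,
          (2*linf βstar) * (|h (l,j)| + |h (m,j)|) := by
      refine (Finset.abs_sum_le_sum_abs _ _).trans ?_
      refine Finset.sum_le_sum fun l _ => ?_
      refine (Finset.abs_sum_le_sum_abs _ _).trans ?_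
      refine Finset.sum_le_sum fun m _ => ?_
      refine (Finset.abs_sum_le_sum_abs _ _).trans ?_
      exact Finset.sum_le_sum fun j _ => step l m j
    have habs2 : ∑ l : Fin r, ∑ m ∈ Finset.univ.filter (fun m => m ≠ l), ∑ j : Fin p,
          (2*linf βstar) * (|h (l,j)| + |h (m,j)|)
        ≤ ∑ l : Fin r, ∑ m : Fin r, ∑ j : Fin p,
          (2*linf βstar) * (|h (l,j)| + |h (m,j)|) := by
      refine Finset.sum_le_sum fun l _ => ?_
      refine Finset.sum_le_sum_of_subset_of_nonneg (Finset.filter_subset _ _)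
        fun m _ _ => Finset.sum_nonneg fun j _ => by positivity
    have hl1prod : l1 h = ∑ l : Fin r, ∑ j : Fin p, |h (l,j)| := by
      rw [l1, Fintype.sum_prod_type]
    have habs3 : ∑ l : Fin r, ∑ m : Fin r, ∑ j : Fin p,
          (2*linf βstar) * (|h (l,j)| + |h (m,j)|)
        = 4*(r:ℝ)*linf βstar * l1 h := by
      calc ∑ l : Fin r, ∑ m : Fin r, ∑ j : Fin p,
            (2*linf βstar) * (|h (l,j)| + |h (m,j)|)
          = ∑ l : Fin r, ∑ m : Fin r,
              ((2*linf βstar) * ∑ j : Fin p, |h (l,j)|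
                + (2*linf βstar) * ∑ j : Fin p, |h (m,j)|) := by
            refine Finset.sum_congr rfl fun l _ => Finset.sum_congr rfl fun m _ => ?_
            rw [Finset.mul_sum, Finset.mul_sum, ← Finset.sum_add_distrib]
            exact Finset.sum_congr rfl fun j _ => by ring
        _ = ∑ l : Fin r, ((r:ℝ) * ((2*linf βstar) * ∑ j : Fin p, |h (l,j)|)
              + (2*linf βstar) * l1 h) := by
            refine Finset.sum_congr rfl fun l _ => ?_
            rw [Finset.sum_add_distrib, Finset.sum_const, Finset.card_univ,
              Fintype.card_fin, nsmul_eq_mul]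
            congr 1
            rw [← Finset.mul_sum, ← hl1prod]
        _ = (r:ℝ) * ((2*linf βstar) * ∑ l : Fin r, ∑ j : Fin p, |h (l,j)|)
              + (r:ℝ) * ((2*linf βstar) * l1 h) := by
            rw [Finset.sum_add_distrib, Finset.sum_const, Finset.card_univ,
              Fintype.card_fin, nsmul_eq_mul, ← Finset.mul_sum, ← Finset.mul_sum]
        _ = 4*(r:ℝ)*linf βstar * l1 h := by
            rw [← hl1prod]
            ring
    calc _ ≤ _ := habs1
      _ ≤ _ := habs2
      _ = _ := habs3
  have hB2 : -(γ * (∑ i, A.mulVec βstar i * A.mulVec h i)) ≤ (δ/4) * l1 h := by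
    rw [hbil]
    set B := ∑ l : Fin r, ∑ m ∈ Finset.univ.filter (fun m => m ≠ l), ∑ j : Fin p,
        (βstar (l,j) - d l m * βstar (m,j)) * (h (l,j) - d l m * h (m,j)) with hBdef
    have h5 : -(γ * B) ≤ γ * |B| := by
      have := mul_le_mul_of_nonneg_left (neg_le_abs B) hγpos.le
      rw [mul_neg] at this
      linarith
    have h6 : γ * |B| ≤ γ * (4*(r:ℝ)*linf βstar * l1 h) :=
      mul_le_mul_of_nonneg_left habs hγpos.le
    have h7 : γ * (4*(r:ℝ)*linf βstar * l1 h) ≤ (δ/4) * l1 h := by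
      nlinarith [hγb, l1_nonneg h]
    linarith
  -- l1 decomposition
  set S : Finset (Fin r × Fin p) := Finset.univ.filter (fun j => βstar j ≠ 0) with hSdef
  set m1 := ∑ j ∈ S, |h j| with hm1def
  set m2 := ∑ j ∈ Sᶜ, |h j| with hm2def
  have hm1nn : 0 ≤ m1 := Finset.sum_nonneg fun j _ => abs_nonneg _
  have hm2nn : 0 ≤ m2 := Finset.sum_nonneg fun j _ => abs_nonneg _
  have hl1split : δ * l1 h = δ * m1 + δ * m2 := by
    rw [l1, ← Finset.sum_add_sum_compl S fun j => |h j|]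
    ring
  have hzeroSc : ∀ j ∈ Sᶜ, βstar j = 0 := by
    intro j hj
    have hns := Finset.mem_compl.mp hj
    rw [hSdef] at hns
    simpa using hns
  have hl1diff : l1 βstar - l1 βhat ≤ m1 - m2 := by
    have e1 : l1 βstar = ∑ j ∈ S, |βstar j| := by
      rw [l1, ← Finset.sum_add_sum_compl S fun j => |βstar j|]
      have : ∑ j ∈ Sᶜ, |βstar j| = 0 :=
        Finset.sum_eq_zero fun j hj => by rw [hzeroSc j hj, abs_zero]
      rw [this, add_zero]
    have e2 : l1 βhat = (∑ j ∈ S, |βhat j|) + ∑ j ∈ Sᶜ, |βhat j| := by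
      rw [l1, ← Finset.sum_add_sum_compl S fun j => |βhat j|]
    have e3 : ∑ j ∈ Sᶜ, |βhat j| = m2 := by
      refine Finset.sum_congr rfl fun j hj => ?_
      rw [hgdef j, hzeroSc j hj, sub_zero]
    have e4 : ∑ j ∈ S, |βstar j| - ∑ j ∈ S, |βhat j| ≤ m1 := by
      rw [← Finset.sum_sub_distrib]
      refine (Finset.sum_le_sum fun j _ => ?_).trans_eq rfl
      calc |βstar j| - |βhat j| ≤ |βstar j - βhat j| := abs_sub_abs_le_abs_sub _ _
        _ = |h j| := by rw [hgdef j, abs_sub_comm]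
    rw [e1, e2, e3]
    linarith
  have hδdiff : δ * (l1 βstar - l1 βhat) ≤ δ * m1 - δ * m2 := by
    have := mul_le_mul_of_nonneg_left hl1diff hδ.le
    linarith [this]
  -- main inequality
  have hAHnn : 0 ≤ γ * l2sq (A.mulVec h) := mul_nonneg hγpos.le (l2sq_nonneg _)
  have hmain : (1/(n:ℝ)) * l2sq (Xt.mulVec h) ≤ (3*δ/2) * m1 - (δ/2) * m2 := by
    rw [mul_sub, mul_add] at hopt
    nlinarith [hopt, hB1, hB2, hδdiff, hl1split, hAHnn]
  have hWnn : 0 ≤ (1/(n:ℝ)) * l2sq (Xt.mulVec h) :=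
    mul_nonneg (by positivity) (l2sq_nonneg _)
  have hcone : m2 ≤ 3 * m1 := by nlinarith [hmain, hWnn, hδ]
  -- indicator sums
  have hindM : ∀ (v : Fin r × Fin p → ℝ),
      l1 ((Function.support βstar).indicator v) = ∑ j ∈ S, |v j| := by
    intro v
    have e : ∀ j, |Set.indicator (Function.support βstar) v j|
        = if βstar j ≠ 0 then |v j| else 0 := by
      intro j
      by_cases hj : βstar j = 0
      · simp [Set.indicator, Function.mem_support, hj]
      · simp [Set.indicator, Function.mem_support, hj]
    rw [l1]
    rw [Finset.sum_congr rfl fun j _ => e j]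
    exact (Finset.sum_filter _ _).symm
  have hindMc : ∀ (v : Fin r × Fin p → ℝ),
      l1 ((Function.support βstar)ᶜ.indicator v) = ∑ j ∈ Sᶜ, |v j| := by
    intro v
    have e : ∀ j, |Set.indicator (Function.support βstar)ᶜ v j|
        = if βstar j = 0 then |v j| else 0 := by
      intro j
      by_cases hj : βstar j = 0
      · simp [Set.indicator, Function.mem_support, hj]
      · simp [Set.indicator, Function.mem_support, hj]
    have eS : Sᶜ = Finset.univ.filter (fun j => βstar j = 0) := by
      ext j
      simp [hSdef]
    rw [l1, Finset.sum_congr rfl fun j _ => e j, eS]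
    exact (Finset.sum_filter _ _).symm
  -- final part
  by_cases hL0 : l2sq h = 0
  · rw [hL0]
    exact mul_nonneg (div_nonneg (by positivity) (by positivity)) (Nat.cast_nonneg _)
  · have hLpos : 0 < l2sq h := (l2sq_nonneg h).lt_of_ne (Ne.symm hL0)
    set c := Real.sqrt (l2sq h) with hcdef
    have hcpos : 0 < c := Real.sqrt_pos.mpr hLpos
    have hc2 : c^2 = l2sq h := Real.sq_sqrt (l2sq_nonneg h)
    set θ : Fin r × Fin p → ℝ := fun j => c⁻¹ * h j with hθdef
    have hinv : (0:ℝ) < c⁻¹ := inv_pos.mpr hcpos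
    have hscale : ∀ (T : Finset (Fin r × Fin p)), ∑ j ∈ T, |θ j| = c⁻¹ * ∑ j ∈ T, |h j| := by
      intro T
      rw [Finset.mul_sum]
      refine Finset.sum_congr rfl fun j _ => ?_
      simp only [hθdef]
      rw [abs_mul, abs_of_pos hinv]
    have hθcone : θ ∈ coneC βstar := by
      simp only [coneC, Set.mem_setOf_eq]
      rw [hindMc θ, hindM θ, hscale, hscale]
      nlinarith [mul_le_mul_of_nonneg_left hcone hinv.le]
    have hθnorm : l2sq θ = 1 := by
      have : l2sq θ = c⁻¹^2 * l2sq h := by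
        simp only [l2sq, hθdef]
        rw [Finset.mul_sum]
        exact Finset.sum_congr rfl fun j _ => by ring
      rw [this, ← hc2]
      field_simp
    obtain ⟨hRE, -⟩ := hC2 θ hθcone hθnorm
    have hquad : θ ⬝ᵥ ((1/(n:ℝ)) • (Xtᵀ * Xt)).mulVec θ
        = (1/(n:ℝ)) * (c⁻¹^2 * l2sq (Xt.mulVec h)) := by
      rw [Matrix.smul_mulVec, dotProduct_smul, smul_eq_mul]
      congr 1
      rw [← Matrix.mulVec_mulVec, Matrix.dotProduct_mulVec, Matrix.vecMul_transpose]
      have hXθ : Xt.mulVec θ = fun i => c⁻¹ * Xt.mulVec h i := by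
        funext i
        rw [hθdef]
        exact mulVec_smul_apply Xt h c⁻¹ i
      rw [hXθ]
      simp only [dotProduct, l2sq]
      rw [Finset.mul_sum]
      exact Finset.sum_congr rfl fun i _ => by ring
    rw [hquad] at hRE
    have hREh : κl * l2sq h ≤ (1/(n:ℝ)) * l2sq (Xt.mulVec h) := by
      have h4 := mul_le_mul_of_nonneg_right hRE (sq_nonneg c)
      rw [← hc2]
      have hcc : c⁻¹^2 * c^2 = 1 := by
        field_simp
      calc κl * c^2 ≤ (1/(n:ℝ)) * (c⁻¹^2 * l2sq (Xt.mulVec h)) * c^2 := h4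
        _ = (1/(n:ℝ)) * l2sq (Xt.mulVec h) * (c⁻¹^2 * c^2) := by ring
        _ = (1/(n:ℝ)) * l2sq (Xt.mulVec h) := by rw [hcc, mul_one]
    have hCS : m1^2 ≤ (S.card : ℝ) * l2sq h := by
      have h1 := Finset.sum_mul_sq_le_sq_mul_sq S (fun _ => (1:ℝ)) (fun j => |h j|)
      simp only [one_pow, one_mul, Finset.sum_const, nsmul_eq_mul, mul_one] at h1
      have h2 : ∑ j ∈ S, |h j|^2 ≤ l2sq h := by
        have e : ∀ j, |h j|^2 = h j ^2 := fun j => sq_abs _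
        rw [Finset.sum_congr rfl fun j _ => e j, l2sq]
        exact Finset.sum_le_sum_of_subset_of_nonneg (Finset.subset_univ S)
          fun j _ _ => sq_nonneg _
      calc m1^2 ≤ (S.card : ℝ) * ∑ j ∈ S, |h j|^2 := h1
        _ ≤ (S.card : ℝ) * l2sq h := mul_le_mul_of_nonneg_left h2 (Nat.cast_nonneg _)
    have hncard : ((Function.support βstar).ncard : ℝ) = (S.card : ℝ) := by
      have e : Function.support βstar = ↑S := by
        ext j
        simp [hSdef, Function.mem_support]
      rw [e, Set.ncard_coe_finset]
    rw [hncard]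
    have hchain : κl * l2sq h ≤ (3*δ/2) * m1 := by
      linarith [hREh, hmain, mul_nonneg hδ.le hm2nn]
    have hsq : (κl * l2sq h)^2 ≤ ((3*δ/2) * m1)^2 :=
      pow_le_pow_left₀ (mul_nonneg hκl.le (l2sq_nonneg h)) hchain 2
    rw [div_mul_eq_mul_div, le_div_iff₀ (by positivity : (0:ℝ) < 4*κl^2)]
    have h9 : ((3*δ/2)*m1)^2 = (9*δ^2/4)*m1^2 := by ring
    have h10 : (9*δ^2/4)*m1^2 ≤ (9*δ^2/4)*((S.card:ℝ)*l2sq h) :=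
      mul_le_mul_of_nonneg_left hCS (by positivity)
    have hA2 : (κl*l2sq h)^2 ≤ (9*δ^2/4)*((S.card:ℝ)*l2sq h) := by
      linarith [hsq, h9, h10]
    have hgoal' : (l2sq h * (4*κl^2)) * l2sq h ≤ (9*δ^2*(S.card:ℝ)) * l2sq h := by
      have e : (l2sq h * (4*κl^2)) * l2sq h = 4*((κl*l2sq h)^2) := by ring
      have e2 : (9*δ^2*(S.card:ℝ)) * l2sq h = 4*((9*δ^2/4)*((S.card:ℝ)*l2sq h)) := by ring
      rw [e, e2]
      linarith [hA2]
    exact le_of_mul_le_mul_right hgoal' hLpos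

end
end

section
/- Assume: (C4) β* ≠ 0; the gradient bound (1/n)‖X̃ᵀε̃‖_∞ ≤ δ/4 holds; and 0 < γ < δ/(16·r·‖β*‖_∞). Then for any A ∈ 𝒜, every minimizer β̂(A) of (1/(2n))‖ỹ − X̃β‖₂² + δ‖β‖₁ + (γ/2)‖Aβ‖₂² satisfies β̂(A) − β* ∈ C, i.e. ‖(β̂(A) − β*)_{M⊥}‖₁ ≤ 3‖(β̂(A) − β*)_M‖₁. -/
open Matrix Finset MeasureTheory ProbabilityTheory Filter
open scoped Kronecker ENNReal Topology

noncomputable section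

/-!
Write `h = β̂ - β*`. Comparing the objective at `β̂` with its value at `β*` (the basic
inequality of the lasso) gives `δ (‖β* + h‖₁ - ‖β*‖₁) ≤ (1/n)⟨X̃ᵀε̃, h⟩ - γ ⟨Aβ*, Ah⟩`.
The gradient bound makes the noise term at most `(δ/4)‖h‖₁`. Polarizing the identity that
defines `𝒜` turns `⟨Aβ*, Ah⟩` into `Σ_{l ≠ m} ⟨β*_l - d_{lm} β*_m, h_l - d_{lm} h_m⟩`, which is at
most `4 r ‖β*‖_∞ ‖h‖₁` in absolute value, and the choice of `γ` makes `γ` times this at most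
`(δ/4)‖h‖₁`. Hence `‖β* + h‖₁ ≤ ‖β*‖₁ + ‖h‖₁ / 2`, and splitting `h` along the support of `β*`
yields the cone condition, as for the lasso.
-/

section Norms

variable {ι κ : Type*} [Fintype ι] [Fintype κ]

lemma l2sq_add (a b : ι → ℝ) : l2sq (a + b) = l2sq a + 2 * (a ⬝ᵥ b) + l2sq b := by
  simp only [l2sq, dotProduct, Pi.add_apply, Finset.mul_sum, ← Finset.sum_add_distrib]
  exact Finset.sum_congr rfl fun _ _ => by ring

lemma l2sq_sub (a b : ι → ℝ) : l2sq (a - b) = l2sq a - 2 * (a ⬝ᵥ b) + l2sq b := by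
  have hneg : l2sq (-b) = l2sq b := by simp [l2sq]
  rw [sub_eq_add_neg, l2sq_add, dotProduct_neg, hneg]
  ring

lemma abs_le_linf (v : ι → ℝ) (i : ι) : |v i| ≤ linf v :=
  le_ciSup (Set.finite_range fun i => |v i|).bddAbove i

lemma linf_pos {v : ι → ℝ} (hv : v ≠ 0) : 0 < linf v := by
  obtain ⟨i, hi⟩ := Function.ne_iff.mp hv
  exact (abs_pos.mpr hi).trans_le (abs_le_linf v i)

lemma mul_dotProduct_le_mul_l1 {v : ι → ℝ} {b c : ℝ} (hc : 0 ≤ c) (hv : ∀ i, c * |v i| ≤ b)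
    (w : ι → ℝ) : c * (v ⬝ᵥ w) ≤ b * l1 w := by
  rw [dotProduct, l1, Finset.mul_sum, Finset.mul_sum]
  refine Finset.sum_le_sum fun i _ => ?_
  calc c * (v i * w i) ≤ c * |v i| * |w i| := by
        rw [mul_assoc, ← abs_mul]; exact mul_le_mul_of_nonneg_left (le_abs_self _) hc
    _ ≤ b * |w i| := mul_le_mul_of_nonneg_right (hv i) (abs_nonneg _)

lemma sum_sum_sum_abs_add_abs (η : κ × ι → ℝ) :
    ∑ l : κ, ∑ m : κ, ∑ j : ι, (|η (l, j)| + |η (m, j)|) = 2 * Fintype.card κ * l1 η := by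
  have hl1 : l1 η = ∑ l : κ, ∑ j : ι, |η (l, j)| := Fintype.sum_prod_type _
  simp only [Finset.sum_add_distrib, Finset.sum_const, Finset.card_univ, nsmul_eq_mul,
    ← Finset.mul_sum, ← hl1]
  ring

end Norms

section Cone

variable {ι : Type*} [Fintype ι]

lemma l1_eq_l1_indicator_add_l1_indicator_compl (s : Set ι) (h : ι → ℝ) :
    l1 h = l1 (s.indicator h) + l1 (sᶜ.indicator h) := by
  simp only [l1, ← Finset.sum_add_distrib]
  refine Finset.sum_congr rfl fun j _ => ?_
  by_cases hj : j ∈ s <;> simp [hj]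

lemma l1_add_l1_indicator_compl_support_sub_le (b h : ι → ℝ) :
    l1 b + l1 ((Function.support b)ᶜ.indicator h) - l1 ((Function.support b).indicator h)
      ≤ l1 (b + h) := by
  simp only [l1, ← Finset.sum_add_distrib, ← Finset.sum_sub_distrib]
  refine Finset.sum_le_sum fun j _ => ?_
  by_cases hj : b j = 0
  · simp [hj]
  · have hmem : j ∈ Function.support b := hj
    simp only [Set.indicator_of_mem hmem, Set.indicator_of_notMem (Set.notMem_compl_iff.mpr hmem),
      abs_zero, add_zero, Pi.add_apply]
    have := abs_sub_abs_le_abs_sub (b j) (-h j)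
    rwa [abs_neg, sub_neg_eq_add] at this

lemma mem_coneC_of_l1_add_le {p r : ℕ} {βstar h : Fin r × Fin p → ℝ}
    (hle : l1 (βstar + h) ≤ l1 βstar + l1 h / 2) : h ∈ coneC βstar := by
  have hsplit := l1_eq_l1_indicator_add_l1_indicator_compl (Function.support βstar) h
  have hgain := l1_add_l1_indicator_compl_support_sub_le βstar h
  simp only [coneC, Set.mem_ofPred_eq]
  linarith

end Cone

section Fusion

variable {p r : ℕ}

/-- The bilinear form polarizing `β ↦ Σ_l Σ_{m ≠ l} ‖β_l - d_{lm} β_m‖₂²` from the definition of `calA`. -/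
def fusionForm (d : Fin r → Fin r → ℝ) (β η : Fin r × Fin p → ℝ) : ℝ :=
  ∑ l : Fin r, ∑ m ∈ Finset.univ.filter (fun m => m ≠ l),
    ∑ j : Fin p, (β (l, j) - d l m * β (m, j)) * (η (l, j) - d l m * η (m, j))

lemma fusionForm_add_add (d : Fin r → Fin r → ℝ) (β η : Fin r × Fin p → ℝ) :
    fusionForm d (β + η) (β + η) = fusionForm d β β + 2 * fusionForm d β η + fusionForm d η η := by
  simp only [fusionForm, Finset.mul_sum, ← Finset.sum_add_distrib]
  refine Finset.sum_congr rfl fun l _ => Finset.sum_congr rfl fun m _ =>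
    Finset.sum_congr rfl fun j _ => ?_
  simp only [Pi.add_apply]
  ring

lemma exists_dotProduct_mulVec_eq_fusionForm {A : Matrix (PairIdx r × Fin p) (Fin r × Fin p) ℝ}
    (hA : A ∈ calA p r) :
    ∃ d : Fin r → Fin r → ℝ, (∀ l m, |d l m| ≤ 1) ∧
      ∀ β η, A *ᵥ β ⬝ᵥ A *ᵥ η = fusionForm d β η := by
  obtain ⟨-, d, hd, hQ⟩ := hA
  have hdiag : ∀ β, l2sq (A *ᵥ β) = fusionForm d β β := fun β => by
    simp only [hQ β, fusionForm, sq]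
  refine ⟨d, fun l m => by rcases hd l m with h | h | h <;> simp [h], fun β η => ?_⟩
  have hsum := hdiag (β + η)
  rw [mulVec_add, l2sq_add, fusionForm_add_add, hdiag β, hdiag η] at hsum
  linarith

lemma abs_sub_mul_le {a b c : ℝ} (hc : |c| ≤ 1) : |a - c * b| ≤ |a| + |b| := by
  calc |a - c * b| ≤ |a| + |c| * |b| := (abs_sub _ _).trans_eq (by rw [abs_mul])
    _ ≤ |a| + |b| := by gcongr; exact mul_le_of_le_one_left (abs_nonneg b) hc

lemma abs_fusionForm_le {d : Fin r → Fin r → ℝ} (hd : ∀ l m, |d l m| ≤ 1)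
    {β : Fin r × Fin p → ℝ} {B : ℝ} (hβ : ∀ i, |β i| ≤ B) (η : Fin r × Fin p → ℝ) :
    |fusionForm d β η| ≤ 4 * r * B * l1 η := by
  have hterm : ∀ l m j, |(β (l, j) - d l m * β (m, j)) * (η (l, j) - d l m * η (m, j))|
      ≤ 2 * B * (|η (l, j)| + |η (m, j)|) := fun l m j => by
    rw [abs_mul]
    have hβlm : |β (l, j) - d l m * β (m, j)| ≤ 2 * B := by
      linarith [abs_sub_mul_le (a := β (l, j)) (b := β (m, j)) (hd l m), hβ (l, j), hβ (m, j)]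
    exact mul_le_mul hβlm (abs_sub_mul_le (hd l m)) (abs_nonneg _)
      ((abs_nonneg _).trans hβlm)
  calc |fusionForm d β η|
      ≤ ∑ l : Fin r, ∑ m ∈ Finset.univ.filter (fun m => m ≠ l), ∑ j : Fin p,
          2 * B * (|η (l, j)| + |η (m, j)|) := by
        refine (Finset.abs_sum_le_sum_abs _ _).trans (Finset.sum_le_sum fun l _ => ?_)
        refine (Finset.abs_sum_le_sum_abs _ _).trans (Finset.sum_le_sum fun m _ => ?_)
        exact (Finset.abs_sum_le_sum_abs _ _).trans (Finset.sum_le_sum fun j _ => hterm l m j)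
    _ ≤ ∑ l : Fin r, ∑ m : Fin r, ∑ j : Fin p, 2 * B * (|η (l, j)| + |η (m, j)|) := by
        refine Finset.sum_le_sum fun l _ => Finset.sum_le_sum_of_subset_of_nonneg
          (Finset.filter_subset _ _) fun m _ _ => Finset.sum_nonneg fun j _ => ?_
        have := (abs_nonneg _).trans (hβ (l, j))
        positivity
    _ = 4 * r * B * l1 η := by
        simp only [← Finset.mul_sum]
        rw [sum_sum_sum_abs_add_abs, Fintype.card_fin]
        ring

end Fusion

lemma l1_add_sub_le_of_obj_le {n p r : ℕ} {δ γ : ℝ} (hγ : 0 ≤ γ)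
    {Xt : Matrix (Fin r × Fin n) (Fin r × Fin p) ℝ}
    {A : Matrix (PairIdx r × Fin p) (Fin r × Fin p) ℝ} {βstar h : Fin r × Fin p → ℝ}
    {εt : Fin r × Fin n → ℝ}
    (hmin : obj δ γ (fun ik => Xt.mulVec βstar ik + εt ik) Xt A (βstar + h) ≤
      obj δ γ (fun ik => Xt.mulVec βstar ik + εt ik) Xt A βstar) :
    δ * (l1 (βstar + h) - l1 βstar) ≤
      1 / (n : ℝ) * (Xtᵀ *ᵥ εt ⬝ᵥ h) - γ * (A *ᵥ βstar ⬝ᵥ A *ᵥ h) := by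
  have hres : (fun ik => (Xt *ᵥ βstar) ik + εt ik - (Xt *ᵥ (βstar + h)) ik) = εt - Xt *ᵥ h := by
    ext ik
    simp only [mulVec_add, Pi.add_apply, Pi.sub_apply]
    ring
  have hres₀ : (fun ik => (Xt *ᵥ βstar) ik + εt ik - (Xt *ᵥ βstar) ik) = εt := by
    ext ik
    ring
  have hcross : εt ⬝ᵥ Xt *ᵥ h = Xtᵀ *ᵥ εt ⬝ᵥ h := by
    rw [dotProduct_mulVec, mulVec_transpose]
  simp only [obj] at hmin
  rw [hres, hres₀, l2sq_sub, hcross, mulVec_add, l2sq_add] at hmin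
  have hfit : 0 ≤ 1 / (2 * (n : ℝ)) * l2sq (Xt *ᵥ h) := by
    have := l2sq_nonneg (Xt *ᵥ h)
    positivity
  have hpen : 0 ≤ γ / 2 * l2sq (A *ᵥ h) := by
    have := l2sq_nonneg (A *ᵥ h)
    positivity
  linear_combination hmin + hfit + hpen

/-- Cone membership: under β* ≠ 0, the gradient bound (1/n)‖X̃ᵀε̃‖_∞ ≤ δ/4 and
0 < γ < δ/(16r‖β*‖_∞), every minimizer β̂(A) satisfies β̂(A) - β* ∈ C, i.e.
‖(β̂(A) - β*)_{M⊥}‖₁ ≤ 3‖(β̂(A) - β*)_M‖₁. -/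
theorem statement13 (n p r : ℕ)
    (X : Matrix (Fin n) (Fin p) ℝ)
    (βstar : Fin r × Fin p → ℝ)
    (εt : Fin r × Fin n → ℝ)
    (δ γ : ℝ)
    -- Condition (C4): β* ≠ 0
    (hC4 : βstar ≠ 0)
    -- gradient bound (1/n)‖X̃ᵀε̃‖_∞ ≤ δ/4
    (hgrad : ∀ j, (1 / (n : ℝ)) * |(Xtil r X)ᵀ.mulVec εt j| ≤ δ / 4)
    -- tuning parameter condition 0 < γ < δ/(16 r ‖β*‖_∞)
    (hγpos : 0 < γ) (hγ : γ < δ / (16 * (r : ℝ) * linf βstar)) :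
    ∀ A ∈ calA p r, ∀ βhat : Fin r × Fin p → ℝ,
      (∀ β : Fin r × Fin p → ℝ,
        obj δ γ (fun ik => (Xtil r X).mulVec βstar ik + εt ik) (Xtil r X) A βhat ≤
        obj δ γ (fun ik => (Xtil r X).mulVec βstar ik + εt ik) (Xtil r X) A β) →
      (fun j => βhat j - βstar j) ∈ coneC βstar := by
  intro A hA βhat hmin
  set h : Fin r × Fin p → ℝ := fun j => βhat j - βstar j
  have hβhat : βhat = βstar + h := by ext j; simp [h]
  obtain ⟨d, hd, hAd⟩ := exists_dotProduct_mulVec_eq_fusionForm hA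
  have hbasic := l1_add_sub_le_of_obj_le hγpos.le (hβhat ▸ hmin βstar)
  have hnoise := mul_dotProduct_le_mul_l1 (by positivity) hgrad h
  have hfusion : |A *ᵥ βstar ⬝ᵥ A *ᵥ h| ≤ 4 * r * linf βstar * l1 h := by
    rw [hAd]
    exact abs_fusionForm_le hd (abs_le_linf βstar) h
  obtain ⟨i, -⟩ := Function.ne_iff.mp hC4
  have hr : 0 < r := i.1.pos
  have hB := linf_pos hC4
  have hγδ : γ * (4 * r * linf βstar) ≤ δ / 4 := by
    have := (lt_div_iff₀ (by positivity)).mp hγ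
    linarith
  have hδ : 0 < δ := by
    have : 0 < γ * (4 * r * linf βstar) := by positivity
    linarith
  have hpenalty : -(γ * (A *ᵥ βstar ⬝ᵥ A *ᵥ h)) ≤ δ / 4 * l1 h := by
    nlinarith [(abs_le.mp hfusion).1, mul_le_mul_of_nonneg_right hγδ (l1_nonneg h)]
  refine mem_coneC_of_l1_add_le (le_of_mul_le_mul_left ?_ hδ)
  linarith

end
end
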